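/- Let H be a perfect Abelian Polish group in which all elements have order at most 2. Then for any nonempty open sets U₀,…,Uₙ ⊆ H with n ≥ 7, there exist nonempty open sets Vᵢ ⊆ Uᵢ (i ≤ n) that are pairwise disjoint and form a qif⁻: for every choice of bᵢ ∈ Vᵢ (i ≤ n), the set {bᵢ : i ≤ n} is quasi⁻ independent. -/

import Mathlib

/-!
View `H` as a vector space over `𝔽₂` and choose `aᵢ ∈ Uᵢ` one at a time outside the span of
the previous ones: the span is finite while every nonempty open set of a perfect T1 space is
infinite. Linear independence of `a` says that no nonempty subfamily sums to `0`, which is an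
open condition on tuples; so it survives on a product of small neighbourhoods of the `aᵢ`,
which can moreover be chosen pairwise disjoint because the `aᵢ` are distinct.
-/

def QuasiNegIndep {H : Type*} [AddCommGroup H] (B : Set H) : Prop :=
  8 ≤ B.encard ∧
  ∀ (b : Fin 8 → H) (e : Fin 8 → ℕ),
    Function.Injective b → (∀ i, b i ∈ B) → (∀ i, e i ≤ 1) → (∃ i, e i ≠ 0) →
    ∑ i, e i • b i ≠ 0

open Set Function

theorem IsOpen.infinite {X : Type*} [TopologicalSpace X] [T1Space X] [PerfectSpace X]
    {U : Set X} (hU : IsOpen U) (hne : U.Nonempty) : U.Infinite :=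
  let ⟨x, hx⟩ := hne
  infinite_of_mem_nhds x (hU.mem_nhds hx)

theorem exists_linearIndependent_forall_mem (K : Type*) {V : Type*} [Field K] [Finite K]
    [AddCommGroup V] [Module K V] [TopologicalSpace V] [T1Space V] [PerfectSpace V] :
    ∀ {m : ℕ} {U : Fin m → Set V}, (∀ i, IsOpen (U i)) → (∀ i, (U i).Nonempty) →
      ∃ a : Fin m → V, LinearIndependent K a ∧ ∀ i, a i ∈ U i
  | 0, _, _, _ => ⟨Fin.elim0, linearIndependent_empty_type, fun i => i.elim0⟩
  | m + 1, U, hUo, hUne => by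
    obtain ⟨a, ha, haU⟩ := exists_linearIndependent_forall_mem K
      (U := fun i => U i.castSucc) (fun i => hUo _) (fun i => hUne _)
    have hspan : (Submodule.span K (range a) : Set V).Finite :=
      have := FiniteDimensional.span_of_finite K (finite_range a)
      have := Module.finite_of_finite K (M := Submodule.span K (range a))
      Set.toFinite _
    obtain ⟨c, hcU, hc⟩ := ((hUo (Fin.last m)).infinite (hUne _)).sdiff hspan |>.nonempty
    exact ⟨Fin.snoc a c, linearIndependent_finSnoc.2 ⟨ha, hc⟩,
      Fin.lastCases (by simpa using hcU) (fun i => by simpa using haU i)⟩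

def IsZeroSumFree {ι H : Type*} [AddCommMonoid H] (b : ι → H) : Prop :=
  ∀ S : Finset ι, S.Nonempty → ∑ i ∈ S, b i ≠ 0

theorem LinearIndependent.isZeroSumFree {ι K H : Type*} [Ring K] [Nontrivial K]
    [AddCommGroup H] [Module K H] {b : ι → H} (hb : LinearIndependent K b) :
    IsZeroSumFree b := by
  intro S ⟨i, hi⟩ hS
  exact one_ne_zero (linearIndependent_iff'.1 hb S (fun _ => 1) (by simpa using hS) i hi)

section ZeroSumFree

variable {ι H : Type*} [AddCommMonoid H]

theorem isOpen_setOf_isZeroSumFree [Finite ι] [TopologicalSpace H] [ContinuousAdd H]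
    [T1Space H] : IsOpen {b : ι → H | IsZeroSumFree b} := by
  simp only [IsZeroSumFree, ofPred_forall]
  exact isOpen_iInter_of_finite fun S => isOpen_iInter_of_finite fun _ =>
    isOpen_ne.preimage (continuous_finsetSum S fun i _ => continuous_apply i)

theorem IsZeroSumFree.sum_ne_zero_of_subset_range {b : ι → H} (hb : IsZeroSumFree b)
    (hinj : Injective b) {F : Finset H} (hF : ↑F ⊆ range b) (hne : F.Nonempty) :
    ∑ x ∈ F, x ≠ 0 := by
  classical
  rw [← image_univ] at hF
  obtain ⟨S, -, rfl⟩ := Finset.subset_set_image_iff.1 hF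
  rw [Finset.sum_image hinj.injOn]
  exact hb S (Finset.image_nonempty.1 hne)

end ZeroSumFree

theorem IsZeroSumFree.quasiNegIndep {ι H : Type*} [AddCommGroup H] {b : ι → H}
    (hb : IsZeroSumFree b) (hinj : Injective b) (hcard : 8 ≤ ENat.card ι) :
    QuasiNegIndep (range b) := by
  classical
  refine ⟨hcard.trans hinj.encard_range, fun c e hc hcb he he0 => ?_⟩
  have hsum : ∑ i, e i • c i = ∑ x ∈ (Finset.univ.filter (e · ≠ 0)).image c, x := by
    rw [Finset.sum_image hc.injOn, Finset.sum_filter]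
    refine Finset.sum_congr rfl fun i _ => ?_
    rcases Nat.le_one_iff_eq_zero_or_eq_one.1 (he i) with h | h <;> simp [h]
  rw [hsum]
  refine hb.sum_ne_zero_of_subset_range hinj ?_ (by simpa [Finset.filter_nonempty_iff] using he0)
  rw [Finset.coe_image]
  exact (image_subset_range c _).trans (range_subset_iff.2 hcb)

theorem exists_pairwise_disjoint_pi_subset {ι X : Type*} [Finite ι] [TopologicalSpace X]
    [T2Space X] {W : Set (ι → X)} (hW : IsOpen W) {a : ι → X} (haW : a ∈ W)
    (ha : Injective a) :
    ∃ V : ι → Set X, (∀ i, IsOpen (V i) ∧ a i ∈ V i) ∧ Pairwise (Disjoint on V) ∧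
      univ.pi V ⊆ W := by
  obtain ⟨N, hN, hNW⟩ := isOpen_pi_iff'.1 hW a haW
  obtain ⟨D, hD, hDdisj⟩ := (finite_range a).t2_separation
  refine ⟨fun i => N i ∩ D (a i), fun i => ⟨(hN i).1.inter (hD _).2, (hN i).2, (hD _).1⟩,
    fun i j hij => ?_, (pi_mono fun i _ => inter_subset_left).trans hNW⟩
  exact (hDdisj (mem_range_self i) (mem_range_self j) (ha.ne hij)).mono
    inter_subset_right inter_subset_right

theorem exists_qifNeg {H : Type*} [AddCommGroup H]
    [TopologicalSpace H] [IsTopologicalAddGroup H] [PolishSpace H]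
    (hperf : Perfect (Set.univ : Set H)) (hexp : ∀ a : H, a + a = 0)
    (n : ℕ) (hn : 7 ≤ n) (U : Fin (n + 1) → Set H)
    (hUo : ∀ i, IsOpen (U i)) (hUne : ∀ i, (U i).Nonempty) :
    ∃ V : Fin (n + 1) → Set H,
      (∀ i, IsOpen (V i)) ∧ (∀ i, (V i).Nonempty) ∧ (∀ i, V i ⊆ U i) ∧
      Pairwise (Function.onFun Disjoint V) ∧
      ∀ b : Fin (n + 1) → H, (∀ i, b i ∈ V i) → QuasiNegIndep (Set.range b) := by
  let := AddCommGroup.zmodModule (n := 2) fun a => (two_nsmul a).trans (hexp a)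
  have : PerfectSpace H := ⟨hperf.2⟩
  obtain ⟨a, ha, haU⟩ := exists_linearIndependent_forall_mem (ZMod 2) hUo hUne
  obtain ⟨V, hV, hVdisj, hVW⟩ := exists_pairwise_disjoint_pi_subset isOpen_setOf_isZeroSumFree
    ha.isZeroSumFree ha.injective
  refine ⟨fun i => U i ∩ V i, fun i => (hUo i).inter (hV i).1, fun i => ⟨a i, haU i, (hV i).2⟩,
    fun i => inter_subset_left,
    fun i j hij => (hVdisj hij).mono inter_subset_right inter_subset_right, fun b hb => ?_⟩
  have hbinj : Injective b := fun i j hbij =>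
    by_contra fun hij => (hVdisj hij).ne_of_mem (hb i).2 (hb j).2 hbij
  exact (hVW fun i _ => (hb i).2).quasiNegIndep hbinj
    (by simpa using (Nat.cast_le (α := ℕ∞)).2 (Nat.succ_le_succ hn))
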